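/- For every horizon m ≥ 0 and every n > 0, the Gaussian one-armed-bandit value function is nondecreasing in the posterior mean: if μ ≤ μ' then V_m(μ,n,γ,τ,λ) ≤ V_m(μ',n,γ,τ,λ). -/

import Mathlib

/-!
Monotonicity in the mean alone does not pass through the Bellman recursion, since comparing two
expectations needs integrable integrands; so the induction also carries Lipschitz continuity in
the mean. Translating the predictive Gaussian to mean zero turns the expectation into
`∫ V_m (μ + τ z / (n + τ)) d𝒩(0, 1/n + 1/τ)(z)`, and averaging translates of a monotone Lipschitz
function against a measure with a first moment is again monotone and Lipschitz in the shift.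
For `γ ≥ 0` the map `μ ↦ max (μ - λ + γ · _) 0` preserves both properties.
-/

open MeasureTheory ProbabilityTheory

/-- Finite-horizon value function of the Gaussian one-armed bandit:
`V γ τ m μ n λ`, with discount `γ`, observation precision `τ`, horizon `m`,
posterior state `(μ, n)` and safe-arm reward `λ`. The expectation over the
next observation is taken under the Gaussian predictive distribution
`𝒩(μ, 1/n + 1/τ)`. -/
noncomputable def V (γ τ : ℝ) : ℕ → ℝ → ℝ → ℝ → ℝ
  | 0, μ, _n, lam => max (μ - lam) 0 / (1 - γ)
  | m + 1, μ, n, lam =>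
      max (μ - lam + γ * ∫ y, V γ τ m ((n * μ + τ * y) / (n + τ)) (n + τ) lam
        ∂(gaussianReal μ (1 / n + 1 / τ).toNNReal)) 0

open scoped NNReal

section TranslatedIntegral

variable {α : Type*} [MeasurableSpace α] {P : Measure α} {f : ℝ → ℝ} {g : α → ℝ} {K : ℝ≥0}

lemma LipschitzWith.integrable_comp_const_add [IsFiniteMeasure P] (hf : LipschitzWith K f)
    (hg : Integrable g P) (a : ℝ) : Integrable (fun z => f (a + g z)) P := by
  refine ((integrable_const ‖f a‖).add (hg.norm.const_mul K)).mono'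
    (hf.continuous.comp_aestronglyMeasurable (hg.1.const_add a)) (ae_of_all _ fun z => ?_)
  calc ‖f (a + g z)‖ ≤ ‖f a‖ + ‖f (a + g z) - f a‖ := norm_le_insert' _ _
    _ ≤ ‖f a‖ + K * ‖g z‖ := by
      gcongr
      simpa [dist_eq_norm] using hf.dist_le_mul (a + g z) a

lemma LipschitzWith.integral_comp_const_add [IsProbabilityMeasure P] (hf : LipschitzWith K f)
    (hg : Integrable g P) : LipschitzWith K fun a => ∫ z, f (a + g z) ∂P := by
  refine LipschitzWith.of_dist_le_mul fun a b => ?_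
  rw [dist_eq_norm, ← integral_sub (hf.integrable_comp_const_add hg a)
    (hf.integrable_comp_const_add hg b)]
  have hbound : ∀ z, ‖f (a + g z) - f (b + g z)‖ ≤ K * dist a b := fun z => by
    simpa [dist_eq_norm] using hf.dist_le_mul (a + g z) (b + g z)
  simpa using norm_integral_le_of_norm_le_const (ae_of_all P hbound)

lemma Monotone.integral_comp_const_add [IsFiniteMeasure P] (hmono : Monotone f)
    (hf : LipschitzWith K f) (hg : Integrable g P) : Monotone fun a => ∫ z, f (a + g z) ∂P :=
  fun a b hab => integral_mono (hf.integrable_comp_const_add hg a)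
    (hf.integrable_comp_const_add hg b) fun z => hmono (by linarith)

end TranslatedIntegral

lemma integral_gaussianReal_eq_integral_const_add (f : ℝ → ℝ) (μ : ℝ) (v : ℝ≥0) :
    ∫ y, f y ∂gaussianReal μ v = ∫ z, f (μ + z) ∂gaussianReal 0 v := by
  rw [← zero_add μ, ← gaussianReal_map_const_add, zero_add]
  exact integral_map_equiv (MeasurableEquiv.addLeft μ) f

lemma V_succ_eq {γ τ n : ℝ} (hnτ : n + τ ≠ 0) (m : ℕ) (μ lam : ℝ) :
    V γ τ (m + 1) μ n lam = max (μ - lam + γ * ∫ z, V γ τ m (μ + τ / (n + τ) * z) (n + τ) lam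
      ∂gaussianReal 0 (1 / n + 1 / τ).toNNReal) 0 := by
  rw [V, integral_gaussianReal_eq_integral_const_add]
  congr 4 with z
  congr 1
  field_simp
  ring

lemma integrable_const_mul_id_gaussianReal (c : ℝ) (v : ℝ≥0) :
    Integrable (fun z => c * z) (gaussianReal 0 v) :=
  ((memLp_id_gaussianReal 1).integrable le_rfl).const_mul c

section ValueFunction

variable {γ τ : ℝ}

lemma monotone_V_zero (hγ1 : γ < 1) (n lam : ℝ) : Monotone fun μ => V γ τ 0 μ n lam :=
  fun _ _ h => div_le_div_of_nonneg_right (max_le_max (sub_le_sub_right h lam) le_rfl)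
    (sub_nonneg.2 hγ1.le)

lemma exists_lipschitzWith_V_zero (n lam : ℝ) : ∃ K, LipschitzWith K fun μ => V γ τ 0 μ n lam :=
  ⟨_, by
    simp only [V, div_eq_inv_mul]
    exact (lipschitzWith_smul (1 - γ)⁻¹).comp ((LipschitzWith.id.sub (.const lam)).max_const 0)⟩

theorem monotone_V_and_exists_lipschitzWith (hγ0 : 0 ≤ γ) (hγ1 : γ < 1) (hτ : 0 < τ) (lam : ℝ)
    (m : ℕ) : ∀ n, 0 < n →
      Monotone (fun μ => V γ τ m μ n lam) ∧ ∃ K, LipschitzWith K fun μ => V γ τ m μ n lam := by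
  induction m with
  | zero => exact fun n _ => ⟨monotone_V_zero hγ1 n lam, exists_lipschitzWith_V_zero n lam⟩
  | succ m ih =>
    intro n hn
    obtain ⟨hmono, K, hlip⟩ := ih (n + τ) (by linarith)
    have hg := integrable_const_mul_id_gaussianReal (τ / (n + τ)) (1 / n + 1 / τ).toNNReal
    simp only [V_succ_eq (by linarith : n + τ ≠ 0)]
    exact ⟨((monotone_id.add_const (-lam)).add
        ((hmono.integral_comp_const_add hlip hg).const_mul hγ0)).max monotone_const,
      _, ((LipschitzWith.id.sub (.const lam)).add
        ((lipschitzWith_smul γ).comp (hlip.integral_comp_const_add hg))).max_const 0⟩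

end ValueFunction

/-- For every horizon `m` and `n > 0`, the Gaussian one-armed-bandit value
is nondecreasing in the posterior mean. -/
theorem nmab_value_monotone_in_mu (γ τ lam : ℝ)
    (hγ0 : 0 ≤ γ) (hγ1 : γ < 1) (hτ : 0 < τ) :
    ∀ m : ℕ, ∀ μ μ' n : ℝ, 0 < n → μ ≤ μ' →
      V γ τ m μ n lam ≤ V γ τ m μ' n lam :=
  fun m _ _ n hn h => (monotone_V_and_exists_lipschitzWith hγ0 hγ1 hτ lam m n hn).1 h
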